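/- For every n ∈ ℕ, both a n and b n are condensation points of X. -/
import Mathlib


def IsCondensationPoint (X : Set ℝ) (x : ℝ) : Prop :=
  ∀ U : Set ℝ, IsOpen U → x ∈ U → Cardinal.aleph 1 ≤ Cardinal.mk ↥(X ∩ U)

theorem stmt10
    (a b : ℕ → ℝ)
    (hlt : ∀ n, a n < b n)
    (haq : ∀ n, ∃ q : ℚ, (q : ℝ) = a n)
    (hbq : ∀ n, ∃ q : ℚ, (q : ℝ) = b n)
    (hdisj : ∀ i j, i ≠ j → Disjoint (Set.Icc (a i) (b i)) (Set.Icc (a j) (b j)))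
    (hhalf : ∀ n, 2 * (b (n + 1) - a (n + 1)) < b n - a n)
    (hgap : ∀ i j, b i < a j → a j - b i > b 0 - a 0)
    (h01 : a 0 < a 1)
    (hcof : ∀ x : ℝ, ∃ k l, b k < x ∧ x < a l)
    (m : ℕ → ℕ)
    (hm : ∀ n, b n < a (m n))
    (hmgap : ∀ n, Disjoint (Set.Ioo (b n) (a (m n))) (⋃ k, Set.Icc (a k) (b k)))
    (A : ℕ → Set ℝ)
    (hA : ∀ n, A n ⊆ Set.Ioo (b n) (a (m n)))
    (hAcard : ∀ n, ∀ U : Set ℝ, IsOpen U → U.Nonempty → U ⊆ Set.Ioo (b n) (a (m n)) →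
      Cardinal.mk ↥(A n ∩ U) = Cardinal.aleph 1)
    (X : Set ℝ)
    (hX : X = ⋃ n, (({x : ℝ | ∃ q : ℚ, (q : ℝ) = x} ∩ Set.Icc (a n) (b n)) ∪ A n)) :
    ∀ n : ℕ, IsCondensationPoint X (a n) ∧ IsCondensationPoint X (b n) := by
  have δpos : 0 < b 0 - a 0 := sub_pos.mpr (hlt 0)
  set δ := b 0 - a 0 with hδ
  -- b's are δ-separated
  have bsep : ∀ i j, b i < b j → δ < b j - b i := by
    intro i j hij
    have hij' : i ≠ j := by intro h; rw [h] at hij; exact lt_irrefl _ hij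
    have hba : b i < a j := by
      by_contra h
      push_neg at h
      exact Set.disjoint_left.mp (hdisj i j hij')
        ⟨le_of_lt (hlt i), le_refl _⟩ ⟨h, le_of_lt hij⟩
    have := hgap i j hba
    have : a j ≤ b j := le_of_lt (hlt j)
    linarith [hgap i j hba]
  -- key lemma: endpoints of a gap are condensation points
  have key : ∀ (K : ℕ) (x : ℝ), x = b K ∨ x = a (m K) → IsCondensationPoint X x := by
    intro K x hx U hU hxU
    obtain ⟨ε, hε, hball⟩ := Metric.isOpen_iff.mp hU x hxU
    obtain ⟨V, hVo, hVne, hVsub, hVU⟩ :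
        ∃ V : Set ℝ, IsOpen V ∧ V.Nonempty ∧ V ⊆ Set.Ioo (b K) (a (m K)) ∧ V ⊆ U := by
      rcases hx with rfl | rfl
      · refine ⟨Set.Ioo (b K) (min (a (m K)) (b K + ε)), isOpen_Ioo,
          Set.nonempty_Ioo.mpr (lt_min (hm K) (by linarith)), ?_, ?_⟩
        · intro y hy
          exact ⟨hy.1, lt_of_lt_of_le hy.2 (min_le_left _ _)⟩
        · intro y hy
          apply hball
          have h2 : y < b K + ε := lt_of_lt_of_le hy.2 (min_le_right _ _)
          rw [Metric.mem_ball, Real.dist_eq, abs_lt]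
          constructor <;> [linarith [hy.1]; linarith]
      · refine ⟨Set.Ioo (max (b K) (a (m K) - ε)) (a (m K)), isOpen_Ioo,
          Set.nonempty_Ioo.mpr (max_lt (hm K) (by linarith)), ?_, ?_⟩
        · intro y hy
          exact ⟨lt_of_le_of_lt (le_max_left _ _) hy.1, hy.2⟩
        · intro y hy
          apply hball
          have h2 : a (m K) - ε < y := lt_of_le_of_lt (le_max_right _ _) hy.1
          rw [Metric.mem_ball, Real.dist_eq, abs_lt]
          constructor <;> [linarith; linarith [hy.2]]
    have hcard := hAcard K V hVo hVne hVsub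
    have hsub : A K ∩ V ⊆ X ∩ U := by
      intro y hy
      refine ⟨?_, hVU hy.2⟩
      rw [hX]
      exact Set.mem_iUnion.mpr ⟨K, Or.inr hy.1⟩
    calc Cardinal.aleph 1 = Cardinal.mk ↥(A K ∩ V) := hcard.symm
      _ ≤ Cardinal.mk ↥(X ∩ U) := Cardinal.mk_le_mk_of_subset hsub
  intro n
  refine ⟨?_, key n (b n) (Or.inl rfl)⟩
  -- find K with b K < a n maximal among the b's
  obtain ⟨k₀, _, hk₀, _⟩ := hcof (a n)
  have hTne : (b '' {k | b k < a n}).Nonempty := ⟨b k₀, ⟨k₀, hk₀, rfl⟩⟩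
  have hTbdd : BddAbove (b '' {k | b k < a n}) := by
    refine ⟨a n, ?_⟩
    rintro r ⟨k, hk, rfl⟩
    exact le_of_lt hk
  set s := sSup (b '' {k | b k < a n}) with hs
  obtain ⟨r, ⟨K, hK, rfl⟩, hr⟩ := exists_lt_of_lt_csSup hTne
    (show s - δ < s by linarith)
  have hmax : ∀ j, b j < a n → b j ≤ b K := by
    intro j hj
    by_contra h
    push_neg at h
    have h1 : δ < b j - b K := bsep K j h
    have h2 : b j ≤ s := le_csSup hTbdd ⟨j, hj, rfl⟩
    linarith
  -- a (m K) ≤ a n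
  have hle : a (m K) ≤ a n := by
    by_contra h
    push_neg at h
    exact Set.disjoint_left.mp (hmgap K) ⟨hK, h⟩
      (Set.mem_iUnion.mpr ⟨n, le_refl _, le_of_lt (hlt n)⟩)
  have heq : a (m K) = a n := by
    rcases eq_or_lt_of_le hle with h | h
    · exact h
    · -- then b (m K) < a n, contradicting maximality
      have hmn : m K ≠ n := by intro he; rw [he] at h; exact lt_irrefl _ h
      have hbmk : b (m K) < a n := by
        by_contra h'
        push_neg at h'
        exact Set.disjoint_left.mp (hdisj (m K) n hmn)
          ⟨le_of_lt h, h'⟩ ⟨le_refl _, le_of_lt (hlt n)⟩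
      have := hmax (m K) hbmk
      have := hm K
      have := hlt (m K)
      linarith
  exact key K (a n) (Or.inr heq.symm)
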